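/- Let A be a complex Banach algebra possessing a contractive approximate identity, and let H be a Hilbert A-module, with representation ρ : A → B(H), which is sub-tracing. Then ρ(A)'' is contained in alg lat ρ(A): every operator T in the double commutant ρ(A)'' maps each closed subspace of H that is invariant under ρ(A) into itself. -/

import Mathlib

noncomputable section

open Filter

open scoped ENNReal

/-- A contractive approximate identity for a (possibly non-unital) normed algebra `A`:
a net `(e i)`, indexed by a nontrivial filter, with `‖e i‖ ≤ 1` for all `i`, such that
`e i * a → a` and `a * e i → a` in norm for every `a ∈ A`. -/
def HasCAI (A : Type) [NonUnitalNormedRing A] : Prop :=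
  ∃ (ι : Type) (l : Filter ι) (e : ι → A), l.NeBot ∧ (∀ i, ‖e i‖ ≤ 1) ∧
    ∀ a : A, Tendsto (fun i => e i * a) l (nhds a) ∧ Tendsto (fun i => a * e i) l (nhds a)

variable (A : Type) [NonUnitalNormedRing A] [NormedSpace ℂ A] [IsScalarTower ℂ A A]
  [SMulCommClass ℂ A A]

/-- A Hilbert `A`-module structure on the Hilbert space `K`: a contractive algebra
homomorphism `π : A → B(K)` which is nondegenerate, i.e. the linear span of
`{π a x : a ∈ A, x ∈ K}` is dense in `K`. -/
def IsHilbertRep {K : Type} [NormedAddCommGroup K] [InnerProductSpace ℂ K] [CompleteSpace K]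
    (π : A →ₙₐ[ℂ] (K →L[ℂ] K)) : Prop :=
  (∀ a : A, ‖π a‖ ≤ ‖a‖) ∧
  Dense ((Submodule.span ℂ {x : K | ∃ (a : A) (y : K), π a y = x} : Submodule ℂ K) : Set K)

/-- A bounded `A`-module map between Hilbert `A`-modules. -/
def IsModuleMap {K L : Type} [NormedAddCommGroup K] [InnerProductSpace ℂ K]
    [NormedAddCommGroup L] [InnerProductSpace ℂ L]
    (πK : A →ₙₐ[ℂ] (K →L[ℂ] K)) (πL : A →ₙₐ[ℂ] (L →L[ℂ] L)) (T : K →L[ℂ] L) : Prop :=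
  ∀ (a : A) (x : K), T (πK a x) = πL a (T x)

/-- `H` is sub-tracing: for every closed `A`-invariant subspace `E` of `H` (a Hilbert
`A`-module under the restricted action), every Hilbert `A`-module `L`, and every nonzero
bounded `A`-module map `R : E → L`, there exists a bounded `A`-module map `V : H → E`
with `R ∘ V ≠ 0`. -/
def IsSubTracing {H : Type} [NormedAddCommGroup H] [InnerProductSpace ℂ H] [CompleteSpace H]
    (πH : A →ₙₐ[ℂ] (H →L[ℂ] H)) : Prop :=
  ∀ (E : Submodule ℂ H), IsClosed (E : Set H) →
    ∀ (hinv : ∀ (a : A), ∀ x ∈ E, πH a x ∈ E),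
    ∀ (L : Type) [NormedAddCommGroup L] [InnerProductSpace ℂ L] [CompleteSpace L],
    ∀ (πL : A →ₙₐ[ℂ] (L →L[ℂ] L)), IsHilbertRep A πL →
    ∀ R : ↥E →L[ℂ] L,
      (∀ (a : A) (x : ↥E), R ⟨πH a ↑x, hinv a ↑x x.2⟩ = πL a (R x)) → R ≠ 0 →
      ∃ V : H →L[ℂ] ↥E,
        (∀ (a : A) (x : H), (↑(V (πH a x)) : H) = πH a ↑(V x)) ∧ R.comp V ≠ 0

/-!
Let `N` be the span of the ranges of all bounded module maps `H → E`. Each such map, viewed as an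
operator on `H`, lies in `ρ(A)'`, so every `T ∈ ρ(A)''` maps the closure of `N` into `E`, and it
remains to show that `E` lies in that closure. Otherwise the orthogonal projection onto `Nᗮ` is
a nonzero module map from `E` to `Nᗮ ≅ H ⧸ closure N`, a Hilbert module under the compression of
`ρ` (nondegenerate thanks to the contractive approximate identity). Sub-tracing then yields a
module map `V : H → E` not killed by this projection, although `V` takes values in `N`.
-/

open Topology

theorem Submodule.orthogonalProjectionOnto_orthogonal_map_starProjection {𝕜 E : Type*}
    [RCLike 𝕜] [NormedAddCommGroup E] [InnerProductSpace 𝕜 E] [CompleteSpace E]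
    {N : Submodule 𝕜 E} {f : E →L[𝕜] E} (hf : ∀ x ∈ N, f x ∈ N) (x : E) :
    Nᗮ.orthogonalProjectionOnto (f (Nᗮ.starProjection x)) =
      Nᗮ.orthogonalProjectionOnto (f x) := by
  have hx : x - Nᗮ.starProjection x ∈ N.topologicalClosure :=
    N.orthogonal_orthogonal_eq_closure ▸ Nᗮ.sub_starProjection_mem_orthogonal x
  rw [eq_comm, ← sub_eq_zero, ← map_sub, ← map_sub, orthogonalProjectionOnto_eq_zero_iff,
    N.orthogonal_orthogonal_eq_closure]
  exact map_mem_closure f.continuous hx hf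

section Representation

variable {A : Type} [NonUnitalNormedRing A] [NormedSpace ℂ A]
variable {K : Type} [NormedAddCommGroup K] [InnerProductSpace ℂ K]

namespace IsHilbertRep

variable [CompleteSpace K]
variable {π : A →ₙₐ[ℂ] (K →L[ℂ] K)}

theorem continuous (hπ : IsHilbertRep A π) : Continuous π :=
  AddMonoidHomClass.continuous_of_bound π 1 fun a => by simpa using hπ.1 a

theorem tendsto_apply_of_tendsto_mul {ι : Type*} {l : Filter ι} {e : ι → A}
    (hπ : IsHilbertRep A π) (he : ∀ i, ‖e i‖ ≤ 1)
    (hel : ∀ a, Tendsto (fun i => e i * a) l (𝓝 a)) (x : K) :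
    Tendsto (fun i => π (e i) x) l (𝓝 x) := by
  let C : Submodule ℂ K :=
    { carrier := {x | Tendsto (fun i => π (e i) x) l (𝓝 x)}
      add_mem' := fun hx hy => by simpa only [Set.mem_ofPred_eq, map_add] using hx.add hy
      zero_mem' := by simpa only [Set.mem_ofPred_eq, map_zero] using tendsto_const_nhds
      smul_mem' := fun c x hx => by simpa only [Set.mem_ofPred_eq, map_smul] using hx.const_smul c }
  have hclosed : IsClosed (C : Set K) := by
    have hbdd : ∃ C, ∀ i, ‖π (e i)‖ ≤ C := ⟨1, fun i => (hπ.1 (e i)).trans (he i)⟩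
    have hequi := ((NormedSpace.equicontinuous_TFAE fun i => π (e i)).out 1 5).mpr hbdd
    exact hequi.isClosed_setOfPred_tendsto continuous_id
  have hspan : Submodule.span ℂ {x : K | ∃ (a : A) (y : K), π a y = x} ≤ C := by
    rw [Submodule.span_le]
    rintro _ ⟨a, y, rfl⟩
    have hcont : Continuous fun b : A => π b y := hπ.continuous.clm_apply continuous_const
    change Tendsto (fun i => π (e i) (π a y)) l (𝓝 (π a y))
    simpa only [Function.comp_def, map_mul, mul_apply_eq_comp] using (hcont.tendsto a).comp (hel a)
  exact closure_minimal hspan hclosed (hπ.2 x)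

end IsHilbertRep

section Compression

variable [CompleteSpace K] (π : A →ₙₐ[ℂ] (K →L[ℂ] K)) (N : Submodule ℂ K) (hN : ∀ a, ∀ x ∈ N, π a x ∈ N)

def orthogonalCompression : A →ₙₐ[ℂ] (Nᗮ →L[ℂ] Nᗮ) where
  toFun a := Nᗮ.orthogonalProjectionOnto ∘L π a ∘L Nᗮ.subtypeL
  map_smul' c a := by ext; simp
  map_zero' := by ext; simp
  map_add' a b := by ext; simp
  map_mul' a b := by
    ext x
    simp [← Nᗮ.starProjection_apply, N.orthogonalProjectionOnto_orthogonal_map_starProjection (hN a)]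

theorem orthogonalCompression_apply (a : A) (x : Nᗮ) :
    orthogonalCompression π N hN a x = Nᗮ.orthogonalProjectionOnto (π a x) :=
  rfl

theorem isModuleMap_orthogonalProjectionOnto :
    IsModuleMap A π (orthogonalCompression π N hN) Nᗮ.orthogonalProjectionOnto := fun a x => by
  rw [orthogonalCompression_apply, ← Nᗮ.starProjection_apply,
    N.orthogonalProjectionOnto_orthogonal_map_starProjection (hN a)]

theorem isHilbertRep_orthogonalCompression (hA : HasCAI A) (hπ : IsHilbertRep A π) :
    IsHilbertRep A (orthogonalCompression π N hN) := by
  refine ⟨fun a => ContinuousLinearMap.opNorm_le_bound _ (norm_nonneg a) fun x => ?_, fun x => ?_⟩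
  · calc ‖Nᗮ.orthogonalProjectionOnto (π a x)‖ ≤ ‖π a x‖ := Nᗮ.norm_orthogonalProjectionOnto_apply_le _
      _ ≤ ‖π a‖ * ‖x‖ := (π a).le_opNorm _
      _ ≤ ‖a‖ * ‖x‖ := by gcongr; exact hπ.1 a
  · obtain ⟨ι, l, e, hl, he, hlim⟩ := hA
    refine mem_closure_of_tendsto (f := fun i => orthogonalCompression π N hN (e i) x) (b := l) ?_
      (Eventually.of_forall fun i => Submodule.subset_span ⟨e i, x, rfl⟩)
    have := (Nᗮ.orthogonalProjectionOnto.continuous.tendsto _).comp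
      (hπ.tendsto_apply_of_tendsto_mul he (fun a => (hlim a).1) x)
    simpa [Function.comp_def, orthogonalCompression_apply] using this

end Compression

section ModuleTrace

variable {ρ : A →ₙₐ[ℂ] (K →L[ℂ] K)} {E : Submodule ℂ K}

variable (ρ E) in
def moduleTrace : Submodule ℂ K :=
  Submodule.span ℂ
    {x | ∃ V : K →L[ℂ] E, (∀ a z, (V (ρ a z) : K) = ρ a (V z)) ∧ ∃ z, (V z : K) = x}

theorem coe_mem_moduleTrace (V : K →L[ℂ] E) (hV : ∀ a z, (V (ρ a z) : K) = ρ a (V z)) (z : K) :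
    (V z : K) ∈ moduleTrace ρ E :=
  Submodule.subset_span ⟨V, hV, z, rfl⟩

theorem map_mem_moduleTrace (a : A) {x : K} (hx : x ∈ moduleTrace ρ E) :
    ρ a x ∈ moduleTrace ρ E := by
  have hle : moduleTrace ρ E ≤ (moduleTrace ρ E).comap (ρ a).toLinearMap := by
    refine Submodule.span_le.mpr ?_
    rintro _ ⟨V, hV, z, rfl⟩
    simpa [← hV] using coe_mem_moduleTrace V hV (ρ a z)
  exact hle hx

theorem topologicalClosure_moduleTrace_le_comap {T : K →L[ℂ] K}
    (hT : T ∈ Set.centralizer (Set.centralizer (Set.range ρ))) (hE : IsClosed (E : Set K)) :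
    (moduleTrace ρ E).topologicalClosure ≤ E.comap T.toLinearMap := by
  have hle : moduleTrace ρ E ≤ E.comap T.toLinearMap := by
    refine Submodule.span_le.mpr ?_
    rintro _ ⟨V, hV, z, rfl⟩
    have hVcomm : E.subtypeL ∘L V ∈ Set.centralizer (Set.range ρ) := by
      rintro _ ⟨a, rfl⟩
      ext u
      exact (hV a u).symm
    have := congr($(hT _ hVcomm) z)
    simp only [mul_apply_eq_comp, ContinuousLinearMap.comp_apply, Submodule.subtypeL_apply] at this
    simp [← this]
  exact Submodule.topologicalClosure_minimal _ hle (hE.preimage T.continuous)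

theorem IsSubTracing.le_topologicalClosure_moduleTrace [CompleteSpace K] (hsub : IsSubTracing A ρ)
    (hA : HasCAI A) (hρ : IsHilbertRep A ρ) (hE : IsClosed (E : Set K))
    (hinv : ∀ a, ∀ x ∈ E, ρ a x ∈ E) : E ≤ (moduleTrace ρ E).topologicalClosure := by
  intro y hy
  by_contra hy'
  set N := moduleTrace ρ E
  let R : E →L[ℂ] Nᗮ := Nᗮ.orthogonalProjectionOnto ∘L E.subtypeL
  have hR0 : R ≠ 0 := fun h => hy' <| by
    have : Nᗮ.orthogonalProjectionOnto y = 0 := congr($h ⟨y, hy⟩)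
    rwa [Submodule.orthogonalProjectionOnto_eq_zero_iff, N.orthogonal_orthogonal_eq_closure] at this
  have hN : ∀ a, ∀ x ∈ N, ρ a x ∈ N := fun a _ => map_mem_moduleTrace a
  have hR : ∀ a (x : E), R ⟨ρ a x, hinv a x x.2⟩ = orthogonalCompression ρ N hN a (R x) :=
    fun a x => isModuleMap_orthogonalProjectionOnto ρ N hN a x
  obtain ⟨V, hV, hRV⟩ := hsub E hE hinv Nᗮ (orthogonalCompression ρ N hN)
    (isHilbertRep_orthogonalCompression ρ N hN hA hρ) R hR hR0
  refine hRV (ContinuousLinearMap.ext fun z => ?_)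
  exact Submodule.orthogonalProjectionOnto_orthogonal_apply_eq_zero (coe_mem_moduleTrace V hV z)

end ModuleTrace

end Representation

theorem subtracing_bicommutant_subset_algLat (hA : HasCAI A)
    (H : Type) [NormedAddCommGroup H] [InnerProductSpace ℂ H] [CompleteSpace H]
    (ρ : A →ₙₐ[ℂ] (H →L[ℂ] H)) (hrep : IsHilbertRep A ρ) (hsub : IsSubTracing A ρ) :
    ∀ x ∈ Set.centralizer (Set.centralizer (Set.range ⇑ρ)),
      ∀ (E : Submodule ℂ H), IsClosed (E : Set H) → (∀ (a : A), ∀ y ∈ E, ρ a y ∈ E) →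
        ∀ y ∈ E, x y ∈ E :=
  fun _ hT _ hE hinv _ hy =>
    topologicalClosure_moduleTrace_le_comap hT hE (hsub.le_topologicalClosure_moduleTrace hA hrep hE hinv hy)
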